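/- Let n, m be positive integers, let ρ > 0, let a ∈ ℝⁿ, let b ∈ ℝᵐ, and let R be an invertible n×n real matrix. Then the supremum over all Δ ∈ ℝ^{m×n} with ‖ΔR‖_F ≤ ρ of ‖Δa + b‖ equals ‖b‖ + ρ‖R⁻¹a‖. -/

import Mathlib

/-!
Writing `Δ a = (Δ R) (R⁻¹ a)` and substituting `Δ' = Δ R` reduces the problem to `R = 1`, with
`c = R⁻¹ a`. There the triangle inequality and Cauchy–Schwarz give
`‖Δ' c + b‖ ≤ ‖b‖ + ‖Δ'‖_F ‖c‖ ≤ ‖b‖ + ρ ‖c‖`, and the rank-one perturbation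
`Δ' = (ρ / ‖c‖) u cᵀ`, with `u` a unit vector pointing along `b`, attains this bound.
-/

open Matrix
open scoped BigOperators

/-- Euclidean norm of a real vector. -/
noncomputable def euclNorm {k : ℕ} (v : Fin k → ℝ) : ℝ :=
  Real.sqrt (∑ i, (v i) ^ 2)

/-- Frobenius norm of a real matrix. -/
noncomputable def frobNorm {m n : ℕ} (A : Matrix (Fin m) (Fin n) ℝ) : ℝ :=
  Real.sqrt (∑ i, ∑ j, (A i j) ^ 2)

lemma exists_norm_eq_one_sameRay {E : Type*} [NormedAddCommGroup E] [NormedSpace ℝ E]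
    [Nontrivial E] (b : E) : ∃ u : E, ‖u‖ = 1 ∧ SameRay ℝ u b := by
  by_cases hb : b = 0
  · obtain ⟨u, hu⟩ := exists_norm_eq E zero_le_one
    exact ⟨u, hu, hb ▸ SameRay.zero_right u⟩
  · exact ⟨‖b‖⁻¹ • b, norm_smul_inv_norm hb,
      SameRay.sameRay_nonneg_smul_left b (inv_nonneg.mpr (norm_nonneg b))⟩

section EuclideanNorms

variable {k p q : ℕ}

lemma euclNorm_eq_norm_toLp (v : Fin k → ℝ) : euclNorm v = ‖WithLp.toLp 2 v‖ := by
  simp [euclNorm, EuclideanSpace.norm_eq]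

lemma euclNorm_nonneg (v : Fin k → ℝ) : 0 ≤ euclNorm v :=
  Real.sqrt_nonneg _

lemma euclNorm_sq (v : Fin k → ℝ) : euclNorm v ^ 2 = ∑ i, v i ^ 2 :=
  Real.sq_sqrt (Finset.sum_nonneg fun _ _ => sq_nonneg _)

lemma euclNorm_add_le (x y : Fin k → ℝ) : euclNorm (x + y) ≤ euclNorm x + euclNorm y := by
  simpa only [euclNorm_eq_norm_toLp, WithLp.toLp_add] using norm_add_le _ _

lemma euclNorm_smul (t : ℝ) (v : Fin k → ℝ) : euclNorm (t • v) = |t| * euclNorm v := by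
  rw [euclNorm_eq_norm_toLp, euclNorm_eq_norm_toLp, WithLp.toLp_smul, norm_smul,
    Real.norm_eq_abs]

lemma exists_euclNorm_eq_one_euclNorm_smul_add (hk : 0 < k) (b : Fin k → ℝ) :
    ∃ u : Fin k → ℝ, euclNorm u = 1 ∧
      ∀ s : ℝ, 0 ≤ s → euclNorm (s • u + b) = s + euclNorm b := by
  have : Nonempty (Fin k) := ⟨⟨0, hk⟩⟩
  obtain ⟨u, hu, hub⟩ := exists_norm_eq_one_sameRay (WithLp.toLp 2 b)
  refine ⟨u.ofLp, by rwa [euclNorm_eq_norm_toLp, WithLp.toLp_ofLp], fun s hs => ?_⟩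
  rw [euclNorm_eq_norm_toLp, euclNorm_eq_norm_toLp, WithLp.toLp_add, WithLp.toLp_smul,
    WithLp.toLp_ofLp, (hub.nonneg_smul_left hs).norm_add, norm_smul, hu, mul_one,
    Real.norm_of_nonneg hs]

lemma euclNorm_mulVec_le (M : Matrix (Fin p) (Fin q) ℝ) (v : Fin q → ℝ) :
    euclNorm (M *ᵥ v) ≤ frobNorm M * euclNorm v := by
  unfold euclNorm frobNorm
  rw [← Real.sqrt_mul (Finset.sum_nonneg fun i _ => Finset.sum_nonneg fun j _ => sq_nonneg (M i j)),
    Finset.sum_mul]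
  exact Real.sqrt_le_sqrt <| Finset.sum_le_sum fun i _ =>
    Finset.sum_mul_sq_le_sq_mul_sq Finset.univ (fun j => M i j) v

lemma frobNorm_vecMulVec (u : Fin p → ℝ) (c : Fin q → ℝ) :
    frobNorm (vecMulVec u c) = euclNorm u * euclNorm c := by
  unfold frobNorm euclNorm
  rw [← Real.sqrt_mul (Finset.sum_nonneg fun i _ => sq_nonneg _), Finset.sum_mul]
  simp only [vecMulVec_apply, mul_pow, Finset.mul_sum]

lemma vecMulVec_mulVec_self (u : Fin p → ℝ) (c : Fin q → ℝ) :
    vecMulVec u c *ᵥ c = euclNorm c ^ 2 • u := by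
  rw [vecMulVec_mulVec, op_smul_eq_smul, euclNorm_sq]
  simp [dotProduct, sq]

end EuclideanNorms

lemma isGreatest_euclNorm_mulVec_add {m n : ℕ} (hm : 0 < m) {ρ : ℝ} (hρ : 0 ≤ ρ)
    (c : Fin n → ℝ) (b : Fin m → ℝ) :
    IsGreatest ((fun Δ => euclNorm (Δ *ᵥ c + b)) ''
        {Δ : Matrix (Fin m) (Fin n) ℝ | frobNorm Δ ≤ ρ})
      (euclNorm b + ρ * euclNorm c) := by
  refine ⟨?_, ?_⟩
  · by_cases hc : euclNorm c = 0
    · refine ⟨0, by simpa [frobNorm] using hρ, ?_⟩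
      simp [hc]
    obtain ⟨u, hu, hub⟩ := exists_euclNorm_eq_one_euclNorm_smul_add hm b
    have hρc : 0 ≤ ρ / euclNorm c := div_nonneg hρ (euclNorm_nonneg c)
    refine ⟨vecMulVec ((ρ / euclNorm c) • u) c, ?_, ?_⟩
    · rw [Set.mem_ofPred_eq, frobNorm_vecMulVec, euclNorm_smul, hu, abs_of_nonneg hρc,
        mul_one, div_mul_cancel₀ ρ hc]
    · have hΔc : vecMulVec ((ρ / euclNorm c) • u) c *ᵥ c = (ρ * euclNorm c) • u := by
        rw [vecMulVec_mulVec_self, smul_smul]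
        field_simp
      dsimp only
      rw [hΔc, hub _ (mul_nonneg hρ (euclNorm_nonneg c)), add_comm]
  · rintro x ⟨Δ, hΔ, rfl⟩
    calc euclNorm (Δ *ᵥ c + b) ≤ euclNorm (Δ *ᵥ c) + euclNorm b := euclNorm_add_le _ _
      _ ≤ frobNorm Δ * euclNorm c + euclNorm b := by gcongr; exact euclNorm_mulVec_le Δ c
      _ ≤ ρ * euclNorm c + euclNorm b := by gcongr; exacts [euclNorm_nonneg c, hΔ]
      _ = euclNorm b + ρ * euclNorm c := add_comm _ _

lemma Matrix.setOf_mul_eq_image_mul_nonsing_inv {l n α : Type*} [Fintype n] [DecidableEq n]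
    [CommRing α] {R : Matrix n n α} (hR : IsUnit R.det) (P : Matrix l n α → Prop) :
    {Δ | P (Δ * R)} = (· * R⁻¹) '' {Δ | P Δ} := by
  ext Δ
  constructor
  · intro hΔ
    exact ⟨Δ * R, hΔ, show Δ * R * R⁻¹ = Δ by rw [Matrix.mul_assoc, mul_nonsing_inv R hR, Matrix.mul_one]⟩
  · rintro ⟨Δ', hΔ', rfl⟩
    rwa [Set.mem_ofPred_eq, Matrix.mul_assoc, nonsing_inv_mul R hR, Matrix.mul_one]

theorem sup_robust_inner_problem_general
    (n m : ℕ) (hm : 0 < m)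
    (ρ : ℝ) (hρ : 0 < ρ)
    (a : Fin n → ℝ) (b : Fin m → ℝ)
    (R : Matrix (Fin n) (Fin n) ℝ) (hR : IsUnit R.det) :
    sSup ((fun Δ => euclNorm (Δ *ᵥ a + b)) ''
        {Δ : Matrix (Fin m) (Fin n) ℝ | frobNorm (Δ * R) ≤ ρ}) =
      euclNorm b + ρ * euclNorm (R⁻¹ *ᵥ a) := by
  rw [setOf_mul_eq_image_mul_nonsing_inv hR (fun Δ => frobNorm Δ ≤ ρ), Set.image_image]
  simp_rw [← mulVec_mulVec]
  exact (isGreatest_euclNorm_mulVec_add hm hρ.le (R⁻¹ *ᵥ a) b).csSup_eq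

/-- Lemma 2: the supremum of ‖Δa + b‖ over {Δ : ‖ΔR‖_F ≤ ρ} equals
‖b‖ + ρ‖R⁻¹a‖. -/
theorem sup_robust_inner_problem
    (n m : ℕ) (hn : 0 < n) (hm : 0 < m)
    (ρ : ℝ) (hρ : 0 < ρ)
    (a : Fin n → ℝ) (b : Fin m → ℝ)
    (R : Matrix (Fin n) (Fin n) ℝ) (hR : IsUnit R.det) :
    sSup ((fun Δ => euclNorm (Δ *ᵥ a + b)) ''
        {Δ : Matrix (Fin m) (Fin n) ℝ | frobNorm (Δ * R) ≤ ρ}) =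
      euclNorm b + ρ * euclNorm (R⁻¹ *ᵥ a) :=
  sup_robust_inner_problem_general n m hm ρ hρ a b R hR
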